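/- arXiv:2412.16549 — 2 statements merged into one kernel-verified Lean document; each statement's English description precedes it below -/
import Mathlib

section
/- Let (X,d) be a discrete metric space of bounded geometry with naive property A, and let Y ⊆ X be a non-empty subspace equipped with the restricted metric. Then Y has naive property A. -/
/-!
Send every point of `X` to a nearest point of `Y`. For `y ∈ Y` this pushes `A y` forward to a
multiset whose points lie within `2S` of `y` and whose multiplicities are bounded by the size `H`
of `S`-balls. Realise it as a set by replacing the multiplicity `k` over `p` by the first `k`
points of a tower `g p ⊆ Y` of `H` points near `p`; if the towers over nearby points are
disjoint, this can only shrink `|A y ∆ A y'|` and only grow `|A y ∩ A y'|`. Such towers are built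
greedily along a well-order, using bounded geometry, and they have full height near `y` as soon as
the `R`-chain component of `y` in `Y` is not contained in a ball of a fixed radius `T`. On the
remaining components, which have diameter at most `2T`, take the whole component.
-/

/-- A metric space is (uniformly) discrete if the distances between distinct points
are bounded below by a positive constant. -/
def UniformlyDiscrete (X : Type*) [MetricSpace X] : Prop :=
  ∃ c : ℝ, 0 < c ∧ ∀ x y : X, x ≠ y → c ≤ dist x y

/-- A metric space has bounded geometry if for every `R > 0` the closed balls of radius `R`
are finite, of uniformly bounded cardinality. -/
def BoundedGeometry (X : Type*) [MetricSpace X] : Prop :=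
  ∀ R : ℝ, 0 < R → ∃ N : ℕ, ∀ x : X,
    (Metric.closedBall x R).Finite ∧ (Metric.closedBall x R).ncard ≤ N

/-- Naive property A. -/
def HasNaivePropertyA (X : Type*) [MetricSpace X] [DecidableEq X] : Prop :=
  ∀ R : ℝ, 0 < R → ∀ ε : ℝ, 0 < ε →
    ∃ (A : X → Finset X) (S : ℝ), 0 < S ∧
      (∀ x : X, (A x).Nonempty) ∧
      (∀ x y : X, dist x y ≤ R →
        ((symmDiff (A x) (A y)).card : ℝ) < ε * ((A x ∩ A y).card : ℝ)) ∧
      (∀ x : X, ∀ y ∈ A x, dist x y ≤ S)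

open Finset Metric

namespace Finset
variable {α : Type*} [DecidableEq α]

noncomputable def take (s : Finset α) (k : ℕ) : Finset α := (s.toList.take k).toFinset

lemma take_subset (s : Finset α) (k : ℕ) : s.take k ⊆ s := fun x hx => by
  simpa [take] using List.mem_of_mem_take (List.mem_toFinset.1 hx)

lemma card_take (s : Finset α) (k : ℕ) : #(s.take k) = min k #s := by
  rw [take, List.toFinset_card_of_nodup (s.nodup_toList.sublist (List.take_sublist _ _)),
    List.length_take, length_toList]

lemma take_mono (s : Finset α) {k m : ℕ} (h : k ≤ m) : s.take k ⊆ s.take m := by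
  intro x hx
  rw [take, List.mem_toFinset] at hx ⊢
  exact (List.take_prefix_take_left h).subset hx

end Finset

theorem exists_disjoint_subsets_of_card_nbr_le {β : Type*} [DecidableEq β]
    (pool nbr : β → Finset β) (nbr_symm : ∀ p q, q ∈ nbr p → p ∈ nbr q) {n : ℕ}
    (card_nbr : ∀ p, #(nbr p) ≤ n) (H : ℕ) :
    ∃ g : β → Finset β, (∀ p, g p ⊆ pool p) ∧
      (∀ p q, p ≠ q → q ∈ nbr p → Disjoint (g p) (g q)) ∧
      ∀ p, (n + 1) * H ≤ #(pool p) → #(g p) = H := by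
  classical
  let r : β → β → Prop := WellOrderingRel
  -- Greedy along `r`: `g p` takes `H` points of `pool p` missed by the `g q` of the neighbours
  -- `q` of `p` that come earlier.
  let g : β → Finset β := IsWellFounded.fix r fun p rec =>
    (pool p \ (nbr p).attach.biUnion fun q => if h : r q p then rec q h else ∅).take H
  set forb : β → Finset β := fun p => (nbr p).biUnion fun q => if r q p then g q else ∅
  have hg : ∀ p, g p = (pool p \ forb p).take H := fun p => by
    rw [show g p = _ from IsWellFounded.fix_eq _ _ _]
    simp only [dite_eq_ite]
    exact congrArg (fun t => (pool p \ t).take H)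
      (attach_biUnion (f := fun q => if r q p then g q else ∅))
  have hg_sub : ∀ p, g p ⊆ pool p \ forb p := fun p => hg p ▸ take_subset _ _
  have hforb : ∀ p q, q ∈ nbr p → r q p → g q ⊆ forb p := fun p q hq hr x hx =>
    mem_biUnion.2 ⟨q, hq, by simpa [hr] using hx⟩
  refine ⟨g, fun p => (hg_sub p).trans sdiff_subset, fun p q hpq hq => ?_, fun p hp => ?_⟩
  · have disjoint_of_lt : ∀ p q, q ∈ nbr p → r q p → Disjoint (g p) (g q) := fun p q hq hr =>
      disjoint_left.2 fun x hxp hxq => (mem_sdiff.1 (hg_sub p hxp)).2 (hforb p q hq hr hxq)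
    rcases trichotomous_of r q p with h | h | h
    · exact disjoint_of_lt p q hq h
    · exact absurd h.symm hpq
    · exact (disjoint_of_lt q p (nbr_symm p q hq) h).symm
  · have card_forb : #(forb p) ≤ n * H := calc
      #(forb p) ≤ ∑ q ∈ nbr p, #(if r q p then g q else ∅) := card_biUnion_le
      _ ≤ ∑ q ∈ nbr p, H := sum_le_sum fun q _ => by
        split_ifs
        · rw [hg, card_take]; exact min_le_left _ _
        · simp
      _ ≤ n * H := by rw [sum_const, smul_eq_mul]; gcongr; exact card_nbr p
    have room : H ≤ #(pool p \ forb p) := by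
      have := le_card_sdiff (forb p) (pool p)
      rw [add_mul, one_mul] at hp
      omega
    rw [hg, card_take, min_eq_left room]

lemma Finset.card_symmDiff {β : Type*} [DecidableEq β] (s t : Finset β) :
    #(symmDiff s t) = #(s \ t) + #(t \ s) := by
  rw [symmDiff_def, sup_eq_union, card_union_of_disjoint disjoint_sdiff_sdiff]

section Spread
variable {α β : Type*} [DecidableEq β] (π : α → β) (g : β → Finset β)

noncomputable def spread (A : Finset α) : Finset β :=
  (A.image π).biUnion fun p => (g p).take #{a ∈ A | π a = p}

structure TowersFit (A : Finset α) : Prop where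
  card_fiber_le : ∀ p ∈ A.image π, #{a ∈ A | π a = p} ≤ #(g p)
  pairwiseDisjoint : (A.image π : Set β).PairwiseDisjoint g

variable {π g} {A B : Finset α}

lemma spread_mono (h : A ⊆ B) : spread π g A ⊆ spread π g B :=
  (biUnion_mono fun _ _ => take_mono _ (card_le_card (filter_subset_filter _ h))).trans
    (biUnion_subset_biUnion_of_subset_left _ (image_subset_image h))

lemma spread_subset_biUnion (A : Finset α) : spread π g A ⊆ (A.image π).biUnion g :=
  biUnion_mono fun _ _ => take_subset _ _

lemma TowersFit.mono (hB : TowersFit π g B) (h : A ⊆ B) : TowersFit π g A where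
  card_fiber_le p hp := (card_le_card (filter_subset_filter _ h)).trans
    (hB.card_fiber_le p (image_subset_image h hp))
  pairwiseDisjoint := hB.pairwiseDisjoint.subset (coe_subset.2 (image_subset_image h))

lemma TowersFit.card_spread (hA : TowersFit π g A) : #(spread π g A) = #A := by
  rw [spread, card_biUnion (hA.pairwiseDisjoint.mono fun p => take_subset _ _),
    card_eq_sum_card_image π A]
  refine sum_congr rfl fun p hp => ?_
  rw [card_take, min_eq_left (hA.card_fiber_le p hp)]

lemma TowersFit.card_sdiff_spread_le [DecidableEq α] (hA : TowersFit π g A) (B : Finset α) :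
    #(spread π g A \ spread π g B) ≤ #(A \ B) := calc
  #(spread π g A \ spread π g B) ≤ #(spread π g A \ spread π g (A ∩ B)) :=
    card_le_card (sdiff_subset_sdiff subset_rfl (spread_mono inter_subset_right))
  _ = #(A \ B) := by
    rw [card_sdiff_of_subset (spread_mono inter_subset_left), hA.card_spread,
      (hA.mono inter_subset_left).card_spread, card_sdiff, inter_comm]

lemma card_symmDiff_spread_le [DecidableEq α] (hA : TowersFit π g A) (hB : TowersFit π g B) :
    #(symmDiff (spread π g A) (spread π g B)) ≤ #(symmDiff A B) := by
  rw [card_symmDiff, card_symmDiff]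
  exact add_le_add (hA.card_sdiff_spread_le B) (hB.card_sdiff_spread_le A)

lemma TowersFit.card_le_card_inter_spread [DecidableEq α] (hAB : TowersFit π g (A ∩ B)) :
    #(A ∩ B) ≤ #(spread π g A ∩ spread π g B) :=
  hAB.card_spread ▸ card_le_card
    (subset_inter (spread_mono inter_subset_left) (spread_mono inter_subset_right))

end Spread

namespace BoundedGeometry
variable {Z W : Type*} [MetricSpace Z] [MetricSpace W]

lemma finite_closedBall (h : BoundedGeometry Z) (x : Z) (R : ℝ) : (closedBall x R).Finite :=
  ((h (max R 1) (by positivity)).choose_spec x).1.subset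
    (closedBall_subset_closedBall (le_max_left _ _))

lemma exists_ncard_closedBall_le (h : BoundedGeometry Z) (R : ℝ) :
    ∃ N : ℕ, ∀ x : Z, (closedBall x R).ncard ≤ N := by
  obtain ⟨N, hN⟩ := h (max R 1) (by positivity)
  exact ⟨N, fun x => (Set.ncard_le_ncard (closedBall_subset_closedBall (le_max_left _ _))
    (hN x).1).trans (hN x).2⟩

lemma of_isometry {f : Z → W} (hf : Isometry f) (h : BoundedGeometry W) :
    BoundedGeometry Z := by
  intro R hR
  obtain ⟨N, hN⟩ := h R hR
  refine ⟨N, fun x => ?_⟩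
  have hball : closedBall x R = f ⁻¹' closedBall (f x) R := by
    ext y; simp [hf.dist_eq]
  rw [hball]
  exact ⟨(hN (f x)).1.preimage hf.injective.injOn,
    (Set.ncard_le_ncard_of_injOn f (fun _ ha => ha) hf.injective.injOn (hN (f x)).1).trans
      (hN (f x)).2⟩

lemma exists_nearest (h : BoundedGeometry Z) {Y : Set Z} (hY : Y.Nonempty) (a : Z) :
    ∃ p : Y, ∀ q : Y, dist a p ≤ dist a q := by
  obtain ⟨y₀, hy₀⟩ := hY
  have hfin : {q : Y | dist a q ≤ dist a y₀}.Finite :=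
    ((h.finite_closedBall a (dist a y₀)).preimage Subtype.val_injective.injOn).subset
      fun q hq => by simpa [dist_comm] using hq
  obtain ⟨p, hp, hmin⟩ := Set.exists_min_image _ (fun q : Y => dist a q) hfin
    ⟨⟨y₀, hy₀⟩, le_refl (dist a y₀)⟩
  exact ⟨p, fun q => (le_total (dist a q) (dist a y₀)).elim (hmin q) hp.trans⟩

-- `K` is chosen before `T`, so that the radius `T` may grow with `K`.
lemma exists_towers (h : BoundedGeometry Z) (D : ℝ) (H : ℕ) :
    ∃ K : ℕ, ∀ T : ℝ, ∃ g : Z → Finset Z, (∀ p, ∀ q ∈ g p, dist q p ≤ T) ∧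
      (∀ p q, p ≠ q → dist p q ≤ D → Disjoint (g p) (g q)) ∧
      ∀ p (s : Finset Z), (∀ q ∈ s, dist q p ≤ T) → K ≤ #s → #(g p) = H := by
  classical
  obtain ⟨n, hn⟩ := h.exists_ncard_closedBall_le D
  refine ⟨(n + 1) * H, fun T => ?_⟩
  obtain ⟨g, hg_sub, hg_disj, hg_card⟩ := exists_disjoint_subsets_of_card_nbr_le
    (fun p => (h.finite_closedBall p T).toFinset) (fun p => (h.finite_closedBall p D).toFinset)
    (fun p q => by simp [dist_comm])
    (fun p => by rw [← Set.ncard_eq_toFinset_card _ (h.finite_closedBall p D)]; exact hn p) H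
  refine ⟨g, fun p q hq => by simpa using hg_sub p hq,
    fun p q hpq hpqD => hg_disj p q hpq (by simpa [dist_comm] using hpqD),
    fun p s hs hK => hg_card p (hK.trans (card_le_card fun q hq => by simpa using hs q hq))⟩

end BoundedGeometry

section NearestPoint
variable {X : Type*} [MetricSpace X] {Y : Set X} {π : X → Y}

lemma dist_nearest_le (hπ : ∀ (a : X) (q : Y), dist a (π a) ≤ dist a q) {y : Y} {a : X} {S : ℝ}
    (ha : dist (y : X) a ≤ S) : dist (y : X) (π a) ≤ 2 * S := calc
  dist (y : X) (π a) ≤ dist (y : X) a + dist a (π a) := dist_triangle _ _ _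
  _ ≤ S + S := add_le_add ha ((hπ a y).trans (dist_comm a (y : X) ▸ ha))
  _ = 2 * S := by ring

lemma card_fiber_nearest_le [DecidableEq X] (hπ : ∀ (a : X) (q : Y), dist a (π a) ≤ dist a q)
    {A : Finset X} {y : Y} {S : ℝ} (hA : ∀ a ∈ A, dist (y : X) a ≤ S) (p : Y) {H : ℕ}
    (hfin : (closedBall (p : X) S).Finite) (hH : (closedBall (p : X) S).ncard ≤ H) :
    #{a ∈ A | π a = p} ≤ H := by
  rw [← Set.ncard_coe_finset]
  refine (Set.ncard_le_ncard (fun a ha => ?_) hfin).trans hH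
  obtain ⟨haA, rfl⟩ := mem_filter.1 (mem_coe.1 ha)
  exact (hπ a y).trans (dist_comm a (y : X) ▸ hA a haA)

end NearestPoint

section CoarseComponent
variable {Z : Type*} [MetricSpace Z] {R : ℝ}

def coarseComponent (R : ℝ) (x : Z) : Set Z :=
  {z | Relation.ReflTransGen (fun u v => dist u v ≤ R) x z}

lemma mem_coarseComponent_self (x : Z) : x ∈ coarseComponent R x :=
  Relation.ReflTransGen.refl

lemma coarseComponent_eq_of_dist_le {x y : Z} (h : dist x y ≤ R) :
    coarseComponent R x = coarseComponent R y := by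
  ext z
  exact ⟨Relation.ReflTransGen.head (by rwa [dist_comm]), Relation.ReflTransGen.head h⟩

lemma exists_dist_mem_Ioc_of_mem_coarseComponent {x z : Z} (hz : z ∈ coarseComponent R x)
    {t : ℝ} (ht : 0 ≤ t) (htz : t < dist x z) : ∃ w, t < dist x w ∧ dist x w ≤ t + R := by
  induction hz with
  | refl => rw [dist_self] at htz; linarith
  | @tail b c _ hbc ih =>
    by_cases hb : t < dist x b
    · exact ih hb
    · exact ⟨c, htz, (dist_triangle x b c).trans (add_le_add (not_lt.1 hb) hbc)⟩

lemma exists_card_eq_of_mem_coarseComponent (hR : 0 ≤ R) {x z : Z}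
    (hz : z ∈ coarseComponent R x) (K : ℕ) (hK : R * K < dist x z) :
    ∃ s : Finset Z, #s = K ∧ ∀ w ∈ s, dist x w ≤ R * K := by
  classical
  have hstep : ∀ j : Fin K, ∃ w, R * j < dist x w ∧ dist x w ≤ R * j + R := fun j =>
    exists_dist_mem_Ioc_of_mem_coarseComponent hz (by positivity)
      (lt_of_le_of_lt (by gcongr; exact_mod_cast j.is_lt.le) hK)
  choose w hw_gt hw_le using hstep
  have hmono : StrictMono fun j => dist x (w j) := fun i j hij => calc
    dist x (w i) ≤ R * (i + 1) := by rw [mul_add_one]; exact hw_le i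
    _ ≤ R * j := by gcongr; exact_mod_cast hij
    _ < dist x (w j) := hw_gt j
  refine ⟨univ.image w, ?_, fun v hv => ?_⟩
  · rw [card_image_of_injective _ (hmono.injective.of_comp), card_univ, Fintype.card_fin]
  · obtain ⟨j, -, rfl⟩ := mem_image.1 hv
    calc dist x (w j) ≤ R * (j + 1) := by rw [mul_add_one]; exact hw_le j
      _ ≤ R * K := by gcongr; exact_mod_cast j.is_lt

def IsBoundedCoarseComponent (R T : ℝ) (x : Z) : Prop :=
  ∃ c, coarseComponent R x ⊆ closedBall c T

variable {T : ℝ}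

lemma IsBoundedCoarseComponent.finite (hbg : BoundedGeometry Z) {x : Z}
    (h : IsBoundedCoarseComponent R T x) : (coarseComponent R x).Finite :=
  (hbg.finite_closedBall _ T).subset h.choose_spec

lemma isBoundedCoarseComponent_iff_of_dist_le {x y : Z} (h : dist x y ≤ R) :
    IsBoundedCoarseComponent R T x ↔ IsBoundedCoarseComponent R T y := by
  rw [IsBoundedCoarseComponent, IsBoundedCoarseComponent, coarseComponent_eq_of_dist_le h]

lemma exists_lt_dist_of_not_isBoundedCoarseComponent {x : Z}
    (h : ¬ IsBoundedCoarseComponent R T x) : ∃ z ∈ coarseComponent R x, T < dist x z := by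
  obtain ⟨z, hz, hzT⟩ := Set.not_subset.1 fun hx => h ⟨x, hx⟩
  exact ⟨z, hz, by simpa [dist_comm] using hzT⟩

lemma exists_naive_family_of_unbounded_components [DecidableEq Z] (hbg : BoundedGeometry Z)
    {ε S₀ : ℝ} (hε : 0 < ε) (hS₀ : 0 < S₀) (B₀ : Z → Finset Z)
    (nonempty : ∀ x, ¬ IsBoundedCoarseComponent R T x → (B₀ x).Nonempty)
    (pair : ∀ x y, ¬ IsBoundedCoarseComponent R T x → ¬ IsBoundedCoarseComponent R T y →
      dist x y ≤ R → (#(symmDiff (B₀ x) (B₀ y)) : ℝ) < ε * #(B₀ x ∩ B₀ y))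
    (radius : ∀ x, ¬ IsBoundedCoarseComponent R T x → ∀ y ∈ B₀ x, dist x y ≤ S₀) :
    ∃ (B : Z → Finset Z) (S : ℝ), 0 < S ∧ (∀ x, (B x).Nonempty) ∧
      (∀ x y, dist x y ≤ R → (#(symmDiff (B x) (B y)) : ℝ) < ε * #(B x ∩ B y)) ∧
      ∀ x, ∀ y ∈ B x, dist x y ≤ S := by
  classical
  let B : Z → Finset Z := fun x =>
    if h : IsBoundedCoarseComponent R T x then (h.finite hbg).toFinset else B₀ x
  have hB_ne : ∀ x, (B x).Nonempty := fun x => by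
    by_cases h : IsBoundedCoarseComponent R T x
    · simpa [B, h] using ⟨x, mem_coarseComponent_self x⟩
    · simpa [B, h] using nonempty x h
  refine ⟨B, max (2 * T) S₀, lt_max_of_lt_right hS₀, hB_ne, fun x y hxy => ?_, fun x y hy => ?_⟩
  · have hiff := isBoundedCoarseComponent_iff_of_dist_le (T := T) hxy
    by_cases h : IsBoundedCoarseComponent R T x
    · have hBxy : B x = B y := by
        ext z
        simp [B, h, hiff.1 h, coarseComponent_eq_of_dist_le hxy]
      rw [hBxy, symmDiff_self, inter_self, bot_eq_empty, card_empty, Nat.cast_zero]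
      exact mul_pos hε (Nat.cast_pos.2 (card_pos.2 (hB_ne y)))
    · simpa [B, h, hiff.not.1 h] using pair x y h (hiff.not.1 h) hxy
  · by_cases h : IsBoundedCoarseComponent R T x
    · have hy' : y ∈ coarseComponent R x := by simpa [B, h] using hy
      obtain ⟨c, hc⟩ := h
      calc dist x y ≤ dist x c + dist y c := dist_triangle_right _ _ _
        _ ≤ 2 * T := by linarith [mem_closedBall.1 (hc (mem_coarseComponent_self x)),
            mem_closedBall.1 (hc hy')]
        _ ≤ max (2 * T) S₀ := le_max_left _ _
    · exact (radius x h y (by simpa [B, h] using hy)).trans (le_max_right _ _)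

end CoarseComponent

lemma exists_naive_family_of_towersFit {α Z : Type*} [DecidableEq α] [MetricSpace Z]
    [DecidableEq Z] (hbg : BoundedGeometry Z) {π : α → Z} {g : Z → Finset Z} {A : Z → Finset α}
    {R T ε S₀ : ℝ} (hε : 0 < ε) (hS₀ : 0 < S₀) (hA_ne : ∀ x, (A x).Nonempty)
    (hA_pair : ∀ x y, dist x y ≤ R → (#(symmDiff (A x) (A y)) : ℝ) < ε * #(A x ∩ A y))
    (hfit : ∀ x, ¬ IsBoundedCoarseComponent R T x → TowersFit π g (A x))
    (hrad : ∀ x, ¬ IsBoundedCoarseComponent R T x → ∀ p ∈ (A x).image π, ∀ q ∈ g p,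
      dist x q ≤ S₀) :
    ∃ (B : Z → Finset Z) (S : ℝ), 0 < S ∧ (∀ x, (B x).Nonempty) ∧
      (∀ x y, dist x y ≤ R → (#(symmDiff (B x) (B y)) : ℝ) < ε * #(B x ∩ B y)) ∧
      ∀ x, ∀ y ∈ B x, dist x y ≤ S := by
  refine exists_naive_family_of_unbounded_components hbg (T := T) hε hS₀ (fun x => spread π g (A x))
    (fun x hx => ?_) (fun x y hx hy hxy => ?_) (fun x hx q hq => ?_)
  · exact card_pos.1 ((hfit x hx).card_spread ▸ card_pos.2 (hA_ne x))
  · calc (#(symmDiff (spread π g (A x)) (spread π g (A y))) : ℝ)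
        ≤ #(symmDiff (A x) (A y)) := by
          exact_mod_cast card_symmDiff_spread_le (hfit x hx) (hfit y hy)
      _ < ε * #(A x ∩ A y) := hA_pair x y hxy
      _ ≤ ε * #(spread π g (A x) ∩ spread π g (A y)) := by
          gcongr
          exact ((hfit x hx).mono inter_subset_left).card_le_card_inter_spread
  · obtain ⟨p, hp, hqp⟩ := mem_biUnion.1 (spread_subset_biUnion _ hq)
    exact hrad x hx p hp q hqp

theorem naivePropertyA_subspace_general (X : Type*) [MetricSpace X] [DecidableEq X]
    (hbg : BoundedGeometry X)
    (hA : HasNaivePropertyA X) (Y : Set X) (hY : Y.Nonempty) :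
    HasNaivePropertyA Y := by
  intro R hR ε hε
  obtain ⟨A, S, hS, hA_ne, hA_pair, hA_rad⟩ := hA R hR ε hε
  choose π hπ using hbg.exists_nearest hY
  have hbgY : BoundedGeometry Y := hbg.of_isometry isometry_subtype_coe
  obtain ⟨H, hH⟩ := hbg.exists_ncard_closedBall_le S
  obtain ⟨K, hK⟩ := hbgY.exists_towers (4 * S) H
  set T := R * K + 2 * S
  obtain ⟨g, hg_rad, hg_disj, hg_card⟩ := hK T
  have hπ_near : ∀ (y : Y), ∀ p ∈ (A y).image π, dist y p ≤ 2 * S := by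
    intro y p hp
    obtain ⟨a, ha, rfl⟩ := mem_image.1 hp
    exact dist_nearest_le hπ (hA_rad y a ha)
  refine exists_naive_family_of_towersFit hbgY (T := T) (S₀ := T + 2 * S) hε (by positivity)
    (fun y => hA_ne y) (fun y y' => hA_pair y y') (fun y hy => ?_)
    (fun y _ p hp q hq => by linarith [dist_triangle_right y q p, hπ_near y p hp, hg_rad p q hq])
  obtain ⟨z, hz, hTz⟩ := exists_lt_dist_of_not_isBoundedCoarseComponent hy
  obtain ⟨s, hsK, hs⟩ := exists_card_eq_of_mem_coarseComponent hR.le hz K (by linarith)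
  refine ⟨fun p hp => ?_, fun p hp q hq hpq => hg_disj p q hpq ?_⟩
  · rw [hg_card p s (fun w hw => ?_) hsK.ge]
    · exact card_fiber_nearest_le hπ (hA_rad y) p (hbg.finite_closedBall p S) (hH p)
    · linarith [dist_triangle_left w p y, hs w hw, hπ_near y p hp]
  · linarith [dist_triangle_left p q y, hπ_near y p hp, hπ_near y q hq]

/-- Naive property A passes to non-empty subspaces (with the restricted metric). -/
theorem naivePropertyA_subspace (X : Type*) [MetricSpace X] [DecidableEq X]
    (hdisc : UniformlyDiscrete X) (hbg : BoundedGeometry X)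
    (hA : HasNaivePropertyA X) (Y : Set X) (hY : Y.Nonempty) :
    HasNaivePropertyA Y :=
  naivePropertyA_subspace_general X hbg hA Y hY
end

section
/- Let X be a set, σ: X → X a map, and a, b: X → ℕ finitely supported functions with ‖a ∧ b‖₁ > 0. Then for every n ∈ ℕ, ‖s_n(a) − s_n(b)‖₁ / ‖s_n(a) ∧ s_n(b)‖₁ ≤ ‖a − b‖₁ / ‖a ∧ b‖₁, where s_n denotes the n-fold composite of s₁. -/
/-- `‖a‖₁` -/
noncomputable def l1Norm {X : Type*} (a : X →₀ ℕ) : ℕ := a.sum fun _ n => n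

/-- `‖a - b‖₁`, with `|a x - b x|` computed on ℕ as `(a x - b x) + (b x - a x)`. -/
noncomputable def l1Dist {X : Type*} (a b : X →₀ ℕ) : ℕ := l1Norm ((a - b) + (b - a))

/-- `a ∧ b` -/
noncomputable def chainMin {X : Type*} (a b : X →₀ ℕ) : X →₀ ℕ :=
  Finsupp.zipWith min (min_self 0) a b

/-- `b(a)` -/
noncomputable def bChain {X : Type*} (a : X →₀ ℕ) : X →₀ ℕ :=
  Finsupp.onFinset a.support (fun x => if a x = 0 then 0 else 1)
    (fun x h => Finsupp.mem_support_iff.mpr (by intro hx; simp [hx] at h))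

/-- `t(a)` -/
noncomputable def tChain {X : Type*} (a : X →₀ ℕ) : X →₀ ℕ := a - bChain a

/-- `s₁` -/
noncomputable def flowStep {X : Type*} (σ : X → X) (a : X →₀ ℕ) : X →₀ ℕ :=
  bChain a + (tChain a).sum fun y n => Finsupp.single (σ y) n

/-!
`s₁` is monotone for the pointwise order and preserves the mass `‖·‖₁`, and so does every
iterate `s_n`. For any such map `f`, monotonicity gives `f (a ∧ b) ≤ f a ∧ f b`, so mass
preservation makes `‖f a ∧ f b‖₁ ≥ ‖a ∧ b‖₁`; the identity
`‖a - b‖₁ + 2 ‖a ∧ b‖₁ = ‖a‖₁ + ‖b‖₁` then makes `‖f a - f b‖₁ ≤ ‖a - b‖₁`. The numerator of the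
ratio decreases and its positive denominator increases.
-/

section Chains

variable {X : Type*}

theorem l1Norm_eq_degree (a : X →₀ ℕ) : l1Norm a = a.degree := rfl

theorem l1Norm_add (a b : X →₀ ℕ) : l1Norm (a + b) = l1Norm a + l1Norm b :=
  map_add Finsupp.degree a b

theorem l1Norm_mono : Monotone (l1Norm : (X →₀ ℕ) → ℕ) := Finsupp.degree_mono

theorem chainMin_eq_inf (a b : X →₀ ℕ) : chainMin a b = a ⊓ b := rfl

theorem l1Dist_add_two_mul_l1Norm_chainMin (a b : X →₀ ℕ) :
    l1Dist a b + 2 * l1Norm (chainMin a b) = l1Norm a + l1Norm b := by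
  have hsplit : (a - b) + (b - a) + (chainMin a b + chainMin a b) = a + b := by
    ext x
    simp only [Finsupp.add_apply, Finsupp.tsub_apply, chainMin_eq_inf, Finsupp.inf_apply]
    omega
  rw [l1Dist, two_mul, ← l1Norm_add, ← l1Norm_add, ← l1Norm_add, hsplit]

end Chains

section MassPreserving

variable {X : Type*} {f : (X →₀ ℕ) → (X →₀ ℕ)}

theorem l1Norm_chainMin_le_map (hf : Monotone f) (hmass : ∀ a, l1Norm (f a) = l1Norm a)
    (a b : X →₀ ℕ) : l1Norm (chainMin a b) ≤ l1Norm (chainMin (f a) (f b)) := by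
  have hmin : f (chainMin a b) ≤ chainMin (f a) (f b) := by
    simp only [chainMin_eq_inf]
    exact le_inf (hf inf_le_left) (hf inf_le_right)
  rw [← hmass]
  exact l1Norm_mono hmin

theorem l1Dist_map_le (hf : Monotone f) (hmass : ∀ a, l1Norm (f a) = l1Norm a)
    (a b : X →₀ ℕ) : l1Dist (f a) (f b) ≤ l1Dist a b := by
  have hsum := l1Dist_add_two_mul_l1Norm_chainMin (f a) (f b)
  rw [hmass, hmass, ← l1Dist_add_two_mul_l1Norm_chainMin a b] at hsum
  have := l1Norm_chainMin_le_map hf hmass a b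
  omega

theorem l1Dist_div_l1Norm_chainMin_map_le (hf : Monotone f)
    (hmass : ∀ a, l1Norm (f a) = l1Norm a) {a b : X →₀ ℕ} (h : 0 < l1Norm (chainMin a b)) :
    (l1Dist (f a) (f b) : ℝ) / l1Norm (chainMin (f a) (f b)) ≤
      (l1Dist a b : ℝ) / l1Norm (chainMin a b) :=
  div_le_div₀ (Nat.cast_nonneg _) (mod_cast l1Dist_map_le hf hmass a b) (mod_cast h)
    (mod_cast l1Norm_chainMin_le_map hf hmass a b)

end MassPreserving

section Flow

variable {X : Type*}

theorem bChain_apply (a : X →₀ ℕ) (x : X) : bChain a x = min (a x) 1 := by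
  change (if a x = 0 then 0 else 1) = _
  split <;> omega

theorem bChain_le (a : X →₀ ℕ) : bChain a ≤ a := fun x => by
  rw [bChain_apply]
  exact min_le_left _ _

theorem monotone_bChain : Monotone (bChain : (X →₀ ℕ) → (X →₀ ℕ)) := fun a c h x => by
  simp only [bChain_apply]
  exact min_le_min_right 1 (h x)

theorem monotone_tChain : Monotone (tChain : (X →₀ ℕ) → (X →₀ ℕ)) := fun a c h x => by
  simp only [tChain, Finsupp.tsub_apply, bChain_apply]
  have := h x
  omega

theorem flowStep_eq (σ : X → X) (a : X →₀ ℕ) :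
    flowStep σ a = bChain a + (tChain a).mapDomain σ := rfl

theorem monotone_flowStep (σ : X → X) : Monotone (flowStep σ) := fun a c h => by
  simp only [flowStep_eq]
  exact add_le_add (monotone_bChain h) (Finsupp.mapDomain_mono (monotone_tChain h))

theorem l1Norm_flowStep (σ : X → X) (a : X →₀ ℕ) : l1Norm (flowStep σ a) = l1Norm a := by
  rw [flowStep_eq, l1Norm_add, l1Norm_eq_degree (Finsupp.mapDomain _ _), Finsupp.degree_mapDomain,
    ← l1Norm_eq_degree, ← l1Norm_add, tChain, add_tsub_cancel_of_le (bChain_le a)]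

end Flow

/-- The flow maps `s_n` (the `n`-fold composites of `s₁`) do not increase the ratio
`‖a - b‖₁ / ‖a ∧ b‖₁`, provided `‖a ∧ b‖₁ > 0`. -/
theorem flow_ratio_nonincreasing {X : Type*} (σ : X → X) (a b : X →₀ ℕ)
    (h : 0 < l1Norm (chainMin a b)) :
    ∀ n : ℕ,
      (l1Dist ((flowStep σ)^[n] a) ((flowStep σ)^[n] b) : ℝ) /
          (l1Norm (chainMin ((flowStep σ)^[n] a) ((flowStep σ)^[n] b)) : ℝ) ≤
        (l1Dist a b : ℝ) / (l1Norm (chainMin a b) : ℝ) := by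
  intro n
  have hmass : l1Norm ∘ (flowStep σ)^[n] = l1Norm :=
    Function.iterate_invariant (funext (l1Norm_flowStep σ)) n
  exact l1Dist_div_l1Norm_chainMin_map_le ((monotone_flowStep σ).iterate n) (congrFun hmass) h
end
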